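/- arXiv:quant-ph/0308150 — 3 statements merged into one kernel-verified Lean document; each statement's English description precedes it below -/
import Mathlib

section
/- For two POMs M₁ and M₂ on measurable spaces Ω₁ and Ω₂ acting on Hilbert spaces H₁ and H₂, the assignment B₁ × B₂ ↦ M₁(B₁) ⊗ M₂(B₂) extends to a POM on Ω₁ × Ω₂ acting on H₁ ⊗ H₂, and for density operators ρ₁, ρ₂, the induced probability measure tr((ρ₁ ⊗ ρ₂)(M₁ ⊗ M₂)(·)) is the product of the measures tr(ρ₁ M₁(·)) and tr(ρ₂ M₂(·)). -/
open MeasureTheory ComplexOrder Kronecker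

/-- A positive operator valued measure (POM) on a measurable space `Ω`,
with values in operators on a finite-dimensional Hilbert space, represented
as complex matrices indexed by `n`. -/
structure POM (Ω : Type*) [MeasurableSpace Ω] (n : Type*) [Fintype n] [DecidableEq n] where
  val : Set Ω → Matrix n n ℂ
  pos : ∀ B : Set Ω, MeasurableSet B → (val B).PosSemidef
  empty : val ∅ = 0
  univ : val Set.univ = 1
  countably_additive : ∀ f : ℕ → Set Ω, (∀ i, MeasurableSet (f i)) →
    Pairwise (Function.onFun Disjoint f) →
    HasSum (fun i => val (f i)) (val (⋃ i, f i))

/-!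
Polarization writes every entry of a POM `M` on `ℂⁿ` as a combination of the four positive
finite measures `B ↦ ⟨v, M(B) v⟩`, `v = e_a + iᵏ e_b`. Hence `M` has a matrix-valued
Radon–Nikodym density `D` with respect to a finite measure `τ` dominating them, and `D` is
positive semidefinite `τ`-a.e. because all its integrals over measurable sets are.

The product POM is `B ↦ ∫_B D₁(ω₁) ⊗ D₂(ω₂) d(τ₁ ⊗ τ₂)`: it is positive because `D₁ ⊗ D₂` is,
countably additive because it is an integral, and equal to `M₁(B₁) ⊗ M₂(B₂)` on rectangles by
Fubini. Finally `tr(ρ M(B)) = ∫_B tr(ρ D) dτ`, so the measure of a state `ρ` has density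
`tr(ρ D)` with respect to `τ`; as `tr((ρ₁ ⊗ ρ₂)(D₁ ⊗ D₂)) = tr(ρ₁ D₁) tr(ρ₂ D₂)`, the measure of
`ρ₁ ⊗ ρ₂` under the product POM is the product of the two measures.
-/

open Matrix

namespace Matrix

variable {m n : Type*} [Fintype m] [Fintype n]

def quadFormₗ (x : n → ℂ) : Matrix n n ℂ →ₗ[ℂ] ℂ where
  toFun A := star x ⬝ᵥ A *ᵥ x
  map_add' A B := by simp [add_mulVec]
  map_smul' c A := by simp [smul_mulVec]

@[simp]
lemma quadFormₗ_apply (x : n → ℂ) (A : Matrix n n ℂ) : quadFormₗ x A = star x ⬝ᵥ A *ᵥ x :=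
  rfl

lemma linearMap_apply_eq_sum [DecidableEq m] [DecidableEq n] (L : Matrix m n ℂ →ₗ[ℂ] ℂ)
    (A : Matrix m n ℂ) : L A = ∑ a, ∑ b, A a b * L (single a b 1) := by
  conv_lhs => rw [matrix_eq_sum_single A]
  simp only [map_sum]
  refine Finset.sum_congr rfl fun a _ => Finset.sum_congr rfl fun b _ => ?_
  rw [← smul_eq_mul, ← map_smul, smul_single, smul_eq_mul, mul_one]

lemma star_dotProduct_mulVec_polarization (A : Matrix n n ℂ) (x y : n → ℂ) :
    star x ⬝ᵥ A *ᵥ y = 4⁻¹ * ∑ k : Fin 4, (-Complex.I) ^ (k : ℕ) *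
      (star (x + Complex.I ^ (k : ℕ) • y) ⬝ᵥ A *ᵥ (x + Complex.I ^ (k : ℕ) • y)) := by
  simp only [Fin.sum_univ_four, star_add, star_smul, add_dotProduct, dotProduct_add, mulVec_add,
    mulVec_smul, smul_dotProduct, dotProduct_smul, smul_eq_mul, Complex.star_def, map_pow,
    Complex.conj_I]
  simp only [Fin.isValue, Fin.coe_ofNat_eq_mod, Nat.zero_mod, pow_zero, one_mul, Nat.one_mod,
    pow_one, neg_mul, Nat.reduceMod, even_two, Even.neg_pow, Complex.I_sq, neg_add_rev, neg_neg,
    Nat.mod_succ, Complex.I_pow_three]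
  ring_nf
  simp only [Complex.I_pow_eq_pow_mod', Nat.reduceMod, Complex.I_pow_three, Complex.I_sq]
  ring

variable [DecidableEq n]

/-- Over `ℂ` a nonnegative quadratic form is automatically Hermitian. -/
theorem posSemidef_of_forall_star_dotProduct_mulVec_nonneg {A : Matrix n n ℂ}
    (h : ∀ x : n → ℂ, 0 ≤ star x ⬝ᵥ A *ᵥ x) : A.PosSemidef := by
  rw [← isPositive_toEuclideanLin_iff, LinearMap.isPositive_iff_complex]
  intro x
  have hx := IsSelfAdjoint.of_nonneg (h x)
  have hstar : x.ofLp ⬝ᵥ star (A *ᵥ x.ofLp) = star (star x.ofLp ⬝ᵥ A *ᵥ x.ofLp) := by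
    rw [star_dotProduct, star_star, dotProduct_comm]
  simp only [toLpLin_apply, EuclideanSpace.inner_eq_star_dotProduct, hstar, hx.star_eq]
  exact ⟨Complex.conj_eq_iff_re.mp hx.star_eq, (Complex.nonneg_iff.mp (h x)).1⟩

open scoped MatrixOrder in
lemma PosSemidef.trace_mul_nonneg {A B : Matrix n n ℂ} (hA : A.PosSemidef)
    (hB : B.PosSemidef) : 0 ≤ (A * B).trace := by
  obtain ⟨C, rfl⟩ := CStarAlgebra.nonneg_iff_eq_star_mul_self.mp hA.nonneg
  rw [Matrix.mul_assoc, trace_mul_comm]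
  exact (hB.mul_mul_conjTranspose_same C).trace_nonneg

end Matrix

lemma ENNReal.ofReal_re_mul_of_nonneg {z : ℂ} (hz : 0 ≤ z) (w : ℂ) :
    ENNReal.ofReal (z * w).re = ENNReal.ofReal z.re * ENNReal.ofReal w.re := by
  obtain ⟨hz, hz'⟩ := Complex.nonneg_iff.mp hz
  rw [Complex.mul_re, ← hz', zero_mul, sub_zero, ENNReal.ofReal_mul hz]

section Integral

variable {α : Type*} [MeasurableSpace α] {μ : Measure α}

theorem Complex.ae_nonneg_of_forall_setIntegral_nonneg {f : α → ℂ} (hf : Integrable f μ)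
    (h : ∀ s, MeasurableSet s → 0 ≤ ∫ x in s, f x ∂μ) : 0 ≤ᵐ[μ] f := by
  have hre : 0 ≤ᵐ[μ] fun x => RCLike.re (f x) :=
    MeasureTheory.ae_nonneg_of_forall_setIntegral_nonneg hf.re fun s hs _ => by
      rw [integral_re hf.restrict]
      exact (Complex.nonneg_iff.mp (h s hs)).1
  have him : (fun x => RCLike.im (f x)) =ᵐ[μ] 0 :=
    hf.im.ae_eq_zero_of_forall_setIntegral_eq_zero fun s hs _ => by
      rw [integral_im hf.restrict]
      exact (Complex.nonneg_iff.mp (h s hs)).2.symm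
  filter_upwards [hre, him] with x hx hx'
  exact Complex.nonneg_iff.mpr ⟨hx, hx'.symm⟩

/-- Mathlib puts no norm on matrices, so matrix-valued integrals are taken entrywise. -/
noncomputable def matrixIntegral {m n : Type*} (μ : Measure α) (D : α → Matrix m n ℂ) :
    Matrix m n ℂ :=
  Matrix.of fun a b => ∫ ω, D ω a b ∂μ

section Linear

variable {m n : Type*} [Fintype m] [Fintype n] {D : α → Matrix m n ℂ}

lemma integrable_linearMap_comp (hD : ∀ a b, Integrable (fun ω => D ω a b) μ)
    (L : Matrix m n ℂ →ₗ[ℂ] ℂ) : Integrable (fun ω => L (D ω)) μ := by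
  classical
  rw [funext fun ω => linearMap_apply_eq_sum L (D ω)]
  exact integrable_finsetSum _ fun a _ => integrable_finsetSum _ fun b _ =>
    (hD a b).mul_const _

lemma integral_linearMap_comp (hD : ∀ a b, Integrable (fun ω => D ω a b) μ)
    (L : Matrix m n ℂ →ₗ[ℂ] ℂ) : ∫ ω, L (D ω) ∂μ = L (matrixIntegral μ D) := by
  classical
  rw [funext fun ω => linearMap_apply_eq_sum L (D ω), linearMap_apply_eq_sum L,
    integral_finsetSum _ fun a _ =>
      integrable_finsetSum _ fun b _ => (hD a b).mul_const _]
  refine Finset.sum_congr rfl fun a _ => ?_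
  rw [integral_finsetSum _ fun b _ => (hD a b).mul_const _]
  simp only [integral_mul_const]
  rfl

end Linear

lemma matrixIntegral_kronecker [SFinite μ] {β : Type*} [MeasurableSpace β] {ν : Measure β}
    [SFinite ν] {m₁ n₁ m₂ n₂ : Type*} (D₁ : α → Matrix m₁ n₁ ℂ) (D₂ : β → Matrix m₂ n₂ ℂ) :
    matrixIntegral (μ.prod ν) (fun z => D₁ z.1 ⊗ₖ D₂ z.2) =
      matrixIntegral μ D₁ ⊗ₖ matrixIntegral ν D₂ := by
  ext p q
  exact integral_prod_mul (fun x => D₁ x p.1 q.1) (fun y => D₂ y p.2 q.2)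

variable {n : Type*} [Fintype n] [DecidableEq n] {D : α → Matrix n n ℂ}

lemma posSemidef_matrixIntegral (hD : ∀ a b, Integrable (fun ω => D ω a b) μ)
    (hpos : ∀ᵐ ω ∂μ, (D ω).PosSemidef) : (matrixIntegral μ D).PosSemidef := by
  refine posSemidef_of_forall_star_dotProduct_mulVec_nonneg fun x => ?_
  rw [← quadFormₗ_apply, ← integral_linearMap_comp hD]
  refine integral_nonneg_of_ae ?_
  filter_upwards [hpos] with ω hω
  exact hω.dotProduct_mulVec_nonneg x

lemma ae_posSemidef_of_forall_posSemidef_matrixIntegral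
    (hD : ∀ a b, Integrable (fun ω => D ω a b) μ)
    (h : ∀ s, MeasurableSet s → (matrixIntegral (μ.restrict s) D).PosSemidef) :
    ∀ᵐ ω ∂μ, (D ω).PosSemidef := by
  have hx (x : n → ℂ) : ∀ᵐ ω ∂μ, 0 ≤ star x ⬝ᵥ D ω *ᵥ x :=
    Complex.ae_nonneg_of_forall_setIntegral_nonneg
      (integrable_linearMap_comp hD (quadFormₗ x)) fun s hs => by
        convert (h s hs).dotProduct_mulVec_nonneg x using 1
        exact integral_linearMap_comp (fun a b => (hD a b).restrict) (quadFormₗ x)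
  obtain ⟨S, hSc, hSd⟩ := TopologicalSpace.exists_countable_dense (n → ℂ)
  filter_upwards [(ae_ball_iff hSc).2 fun x _ => hx x] with ω hω
  exact posSemidef_of_forall_star_dotProduct_mulVec_nonneg
    (hSd.induction hω (isClosed_le continuous_const (by fun_prop)))

end Integral

namespace POM

variable {Ω : Type*} [MeasurableSpace Ω] {n : Type*} [Fintype n] [DecidableEq n]

structure IsDensity (M : POM Ω n) (τ : Measure Ω) (D : Ω → Matrix n n ℂ) : Prop where
  integrable : ∀ a b, Integrable (fun ω => D ω a b) τ
  val_eq : ∀ B, MeasurableSet B → M.val B = matrixIntegral (τ.restrict B) D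

namespace IsDensity

variable {M : POM Ω n} {τ : Measure Ω} {D : Ω → Matrix n n ℂ}

lemma ae_posSemidef (h : M.IsDensity τ D) : ∀ᵐ ω ∂τ, (D ω).PosSemidef :=
  ae_posSemidef_of_forall_posSemidef_matrixIntegral h.integrable fun B hB =>
    h.val_eq B hB ▸ M.pos B hB

lemma integrable_trace_mul (h : M.IsDensity τ D) (ρ : Matrix n n ℂ) :
    Integrable (fun ω => (ρ * D ω).trace) τ :=
  integrable_linearMap_comp h.integrable (traceLinearMap n ℂ ℂ ∘ₗ LinearMap.mulLeft ℂ ρ)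

lemma aemeasurable_ofReal_trace_mul (h : M.IsDensity τ D) (ρ : Matrix n n ℂ) :
    AEMeasurable (fun ω => ENNReal.ofReal (ρ * D ω).trace.re) τ :=
  (Complex.measurable_re.comp_aemeasurable
    (h.integrable_trace_mul ρ).aestronglyMeasurable.aemeasurable).ennreal_ofReal

lemma setIntegral_trace_mul (h : M.IsDensity τ D) (ρ : Matrix n n ℂ) {B : Set Ω}
    (hB : MeasurableSet B) : ∫ ω in B, (ρ * D ω).trace ∂τ = (ρ * M.val B).trace := by
  rw [h.val_eq B hB]
  exact integral_linearMap_comp (fun a b => (h.integrable a b).restrict)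
    (traceLinearMap n ℂ ℂ ∘ₗ LinearMap.mulLeft ℂ ρ)

lemma ofReal_trace_mul_eq_withDensity (h : M.IsDensity τ D) {ρ : Matrix n n ℂ}
    (hρ : ρ.PosSemidef) {B : Set Ω} (hB : MeasurableSet B) :
    ENNReal.ofReal (ρ * M.val B).trace.re =
      τ.withDensity (fun ω => ENNReal.ofReal (ρ * D ω).trace.re) B := by
  have hint := (h.integrable_trace_mul ρ).restrict (s := B)
  rw [withDensity_apply _ hB, ← h.setIntegral_trace_mul ρ hB, ← RCLike.re_to_complex,
    ← integral_re hint]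
  refine ofReal_integral_eq_lintegral_ofReal hint.re ?_
  filter_upwards [ae_restrict_of_ae h.ae_posSemidef] with ω hω
  exact (Complex.nonneg_iff.mp (hρ.trace_mul_nonneg hω)).1

lemma eq_withDensity (h : M.IsDensity τ D) {ρ : Matrix n n ℂ} (hρ : ρ.PosSemidef)
    {μ : Measure Ω}
    (hμ : ∀ B, MeasurableSet B → μ B = ENNReal.ofReal (ρ * M.val B).trace.re) :
    μ = τ.withDensity (fun ω => ENNReal.ofReal (ρ * D ω).trace.re) :=
  Measure.ext fun B hB => (hμ B hB).trans (h.ofReal_trace_mul_eq_withDensity hρ hB)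

end IsDensity

noncomputable def ofDensity (τ : Measure Ω) (D : Ω → Matrix n n ℂ)
    (hD : ∀ a b, Integrable (fun ω => D ω a b) τ) (hpos : ∀ᵐ ω ∂τ, (D ω).PosSemidef)
    (huniv : matrixIntegral τ D = 1) : POM Ω n where
  val B := matrixIntegral (τ.restrict B) D
  pos _ _ := posSemidef_matrixIntegral (fun a b => (hD a b).restrict) (ae_restrict_of_ae hpos)
  empty := by ext; simp [matrixIntegral]
  univ := by rw [Measure.restrict_univ, huniv]
  countably_additive _ hf hd := Pi.hasSum.2 fun a => Pi.hasSum.2 fun b =>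
    hasSum_integral_iUnion hf hd (hD a b).integrableOn

lemma isDensity_ofDensity {τ : Measure Ω} {D : Ω → Matrix n n ℂ}
    (hD : ∀ a b, Integrable (fun ω => D ω a b) τ) (hpos : ∀ᵐ ω ∂τ, (D ω).PosSemidef)
    (huniv : matrixIntegral τ D = 1) : (ofDensity τ D hD hpos huniv).IsDensity τ D :=
  ⟨hD, fun _ _ => rfl⟩

section Polarization

noncomputable def quadraticMeasure (M : POM Ω n) (x : n → ℂ) : Measure Ω :=
  Measure.ofMeasurable (fun B _ => ENNReal.ofReal (star x ⬝ᵥ M.val B *ᵥ x).re)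
    (by simp [M.empty]) fun f hf hd => by
      have hsum : HasSum (fun i => (star x ⬝ᵥ M.val (f i) *ᵥ x).re)
          (star x ⬝ᵥ M.val (⋃ i, f i) *ᵥ x).re := (M.countably_additive f hf hd).map
        (Complex.reAddGroupHom.comp (quadFormₗ x).toAddMonoidHom)
        (Complex.continuous_re.comp (by fun_prop : Continuous fun A : Matrix n n ℂ =>
          star x ⬝ᵥ A *ᵥ x))
      rw [← hsum.tsum_eq, ENNReal.ofReal_tsum_of_nonneg
        (fun i => (Complex.nonneg_iff.mp ((M.pos _ (hf i)).dotProduct_mulVec_nonneg x)).1)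
        hsum.summable]

lemma quadraticMeasure_apply (M : POM Ω n) (x : n → ℂ) {B : Set Ω}
    (hB : MeasurableSet B) :
    M.quadraticMeasure x B = ENNReal.ofReal (star x ⬝ᵥ M.val B *ᵥ x).re :=
  Measure.ofMeasurable_apply B hB

instance (M : POM Ω n) (x : n → ℂ) : IsFiniteMeasure (M.quadraticMeasure x) :=
  ⟨by simp [quadraticMeasure_apply M x MeasurableSet.univ]⟩

lemma quadraticMeasure_real (M : POM Ω n) (x : n → ℂ) {B : Set Ω}
    (hB : MeasurableSet B) :
    ((M.quadraticMeasure x).real B : ℂ) = star x ⬝ᵥ M.val B *ᵥ x := by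
  have hnonneg := (M.pos B hB).dotProduct_mulVec_nonneg x
  rw [measureReal_def, quadraticMeasure_apply M x hB,
    ENNReal.toReal_ofReal (Complex.nonneg_iff.mp hnonneg).1]
  exact Complex.conj_eq_iff_re.mp (IsSelfAdjoint.of_nonneg hnonneg).star_eq

noncomputable def polarizationVector (a b : n) (k : Fin 4) : n → ℂ :=
  Pi.single a 1 + Complex.I ^ (k : ℕ) • Pi.single b 1

noncomputable def dominatingMeasure (M : POM Ω n) : Measure Ω :=
  Measure.sum fun i : n × n × Fin 4 =>
    M.quadraticMeasure (polarizationVector i.1 i.2.1 i.2.2)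

instance (M : POM Ω n) : IsFiniteMeasure M.dominatingMeasure := by
  unfold dominatingMeasure; infer_instance

lemma quadraticMeasure_polarizationVector_ac (M : POM Ω n) (a b : n) (k : Fin 4) :
    M.quadraticMeasure (polarizationVector a b k) ≪ M.dominatingMeasure :=
  Measure.absolutelyContinuous_of_le (Measure.le_sum _ (a, b, k))

noncomputable def density (M : POM Ω n) (ω : Ω) : Matrix n n ℂ :=
  Matrix.of fun a b => 4⁻¹ * ∑ k : Fin 4, (-Complex.I) ^ (k : ℕ) *
    (((M.quadraticMeasure (polarizationVector a b k)).rnDeriv M.dominatingMeasure ω).toReal : ℂ)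

theorem isDensity_density (M : POM Ω n) : M.IsDensity M.dominatingMeasure M.density := by
  have hint (a b : n) (k : Fin 4) : Integrable (fun ω => (-Complex.I) ^ (k : ℕ) *
      (((M.quadraticMeasure (polarizationVector a b k)).rnDeriv M.dominatingMeasure ω).toReal
        : ℂ)) M.dominatingMeasure :=
    Measure.integrable_toReal_rnDeriv.ofReal.const_mul _
  refine ⟨fun a b => (integrable_finsetSum _ fun k _ => hint a b k).const_mul _,
    fun B hB => ?_⟩
  ext a b
  have hν (k : Fin 4) : ∫ ω in B, ((M.quadraticMeasure (polarizationVector a b k)).rnDeriv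
      M.dominatingMeasure ω).toReal ∂M.dominatingMeasure =
        (M.quadraticMeasure (polarizationVector a b k)).real B :=
    Measure.setIntegral_toReal_rnDeriv (M.quadraticMeasure_polarizationVector_ac a b k) B
  have hentry : M.val B a b = star (Pi.single a 1) ⬝ᵥ M.val B *ᵥ Pi.single b 1 := by simp
  simp only [matrixIntegral, density, of_apply]
  rw [integral_const_mul, integral_finsetSum _ fun k _ => (hint a b k).restrict, hentry,
    star_dotProduct_mulVec_polarization]
  simp only [integral_const_mul, integral_complex_ofReal, hν, quadraticMeasure_real M _ hB]
  rfl

end Polarization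

section Kronecker

variable {Ω₁ Ω₂ : Type*} [MeasurableSpace Ω₁] [MeasurableSpace Ω₂]
  {n₁ n₂ : Type*} [Fintype n₁] [DecidableEq n₁] [Fintype n₂] [DecidableEq n₂]

namespace IsDensity

variable {M₁ : POM Ω₁ n₁} {M₂ : POM Ω₂ n₂} {τ₁ : Measure Ω₁} {τ₂ : Measure Ω₂}
  {D₁ : Ω₁ → Matrix n₁ n₁ ℂ} {D₂ : Ω₂ → Matrix n₂ n₂ ℂ}

lemma integrable_kronecker (h₁ : M₁.IsDensity τ₁ D₁) (h₂ : M₂.IsDensity τ₂ D₂)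
    (p q : n₁ × n₂) : Integrable (fun z => (D₁ z.1 ⊗ₖ D₂ z.2) p q) (τ₁.prod τ₂) :=
  (h₁.integrable p.1 q.1).mul_prod (h₂.integrable p.2 q.2)

lemma ae_posSemidef_kronecker (h₁ : M₁.IsDensity τ₁ D₁) (h₂ : M₂.IsDensity τ₂ D₂) :
    ∀ᵐ z ∂(τ₁.prod τ₂), (D₁ z.1).PosSemidef ∧ (D₂ z.2).PosSemidef := by
  filter_upwards [Measure.quasiMeasurePreserving_fst.ae h₁.ae_posSemidef,
    Measure.quasiMeasurePreserving_snd.ae h₂.ae_posSemidef] with z hz₁ hz₂ using ⟨hz₁, hz₂⟩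

lemma matrixIntegral_kronecker_prod [SFinite τ₁] [SFinite τ₂] (h₁ : M₁.IsDensity τ₁ D₁)
    (h₂ : M₂.IsDensity τ₂ D₂)
    {B₁ : Set Ω₁} {B₂ : Set Ω₂} (hB₁ : MeasurableSet B₁) (hB₂ : MeasurableSet B₂) :
    matrixIntegral ((τ₁.prod τ₂).restrict (B₁ ×ˢ B₂)) (fun z => D₁ z.1 ⊗ₖ D₂ z.2) =
      M₁.val B₁ ⊗ₖ M₂.val B₂ := by
  rw [← Measure.prod_restrict, matrixIntegral_kronecker, h₁.val_eq B₁ hB₁, h₂.val_eq B₂ hB₂]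

end IsDensity

variable (M₁ : POM Ω₁ n₁) (M₂ : POM Ω₂ n₂)

noncomputable def kronecker : POM (Ω₁ × Ω₂) (n₁ × n₂) :=
  ofDensity (M₁.dominatingMeasure.prod M₂.dominatingMeasure)
    (fun z => M₁.density z.1 ⊗ₖ M₂.density z.2)
    (M₁.isDensity_density.integrable_kronecker M₂.isDensity_density)
    (by
      filter_upwards [M₁.isDensity_density.ae_posSemidef_kronecker M₂.isDensity_density]
        with z hz using hz.1.kronecker hz.2)
    (by
      simpa [M₁.univ, M₂.univ] using M₁.isDensity_density.matrixIntegral_kronecker_prod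
        M₂.isDensity_density MeasurableSet.univ MeasurableSet.univ)

lemma isDensity_kronecker : (M₁.kronecker M₂).IsDensity
    (M₁.dominatingMeasure.prod M₂.dominatingMeasure)
    (fun z => M₁.density z.1 ⊗ₖ M₂.density z.2) :=
  isDensity_ofDensity _ _ _

lemma kronecker_val_prod {B₁ : Set Ω₁} {B₂ : Set Ω₂} (hB₁ : MeasurableSet B₁)
    (hB₂ : MeasurableSet B₂) : (M₁.kronecker M₂).val (B₁ ×ˢ B₂) = M₁.val B₁ ⊗ₖ M₂.val B₂ :=
  M₁.isDensity_density.matrixIntegral_kronecker_prod M₂.isDensity_density hB₁ hB₂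

end Kronecker

end POM

theorem pom_tensor_product_general
    {Ω₁ Ω₂ : Type*} [MeasurableSpace Ω₁] [MeasurableSpace Ω₂] {d₁ d₂ : ℕ}
    (M₁ : POM Ω₁ (Fin d₁)) (M₂ : POM Ω₂ (Fin d₂))
    (ρ₁ : Matrix (Fin d₁) (Fin d₁) ℂ) (ρ₂ : Matrix (Fin d₂) (Fin d₂) ℂ)
    (hρ₁_pos : ρ₁.PosSemidef)
    (hρ₂_pos : ρ₂.PosSemidef)
    (μ₁ : Measure Ω₁) (μ₂ : Measure Ω₂)
    (hμ₁ : ∀ B : Set Ω₁, MeasurableSet B →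
      μ₁ B = ENNReal.ofReal ((ρ₁ * M₁.val B).trace.re))
    (hμ₂ : ∀ B : Set Ω₂, MeasurableSet B →
      μ₂ B = ENNReal.ofReal ((ρ₂ * M₂.val B).trace.re)) :
    ∃ M : POM (Ω₁ × Ω₂) (Fin d₁ × Fin d₂),
      (∀ (B₁ : Set Ω₁) (B₂ : Set Ω₂), MeasurableSet B₁ → MeasurableSet B₂ →
        M.val (B₁ ×ˢ B₂) = M₁.val B₁ ⊗ₖ M₂.val B₂) ∧
      (∀ B : Set (Ω₁ × Ω₂), MeasurableSet B →
        ENNReal.ofReal (((ρ₁ ⊗ₖ ρ₂) * M.val B).trace.re) = (μ₁.prod μ₂) B) := by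
  have h₁ := M₁.isDensity_density
  have h₂ := M₂.isDensity_density
  refine ⟨M₁.kronecker M₂, fun B₁ B₂ => M₁.kronecker_val_prod M₂, fun B hB => ?_⟩
  rw [(M₁.isDensity_kronecker M₂).ofReal_trace_mul_eq_withDensity
      (hρ₁_pos.kronecker hρ₂_pos) hB,
    h₁.eq_withDensity hρ₁_pos hμ₁, h₂.eq_withDensity hρ₂_pos hμ₂,
    prod_withDensity₀ (h₁.aemeasurable_ofReal_trace_mul ρ₁)
      (h₂.aemeasurable_ofReal_trace_mul ρ₂)]
  congr 1
  refine withDensity_congr_ae ?_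
  filter_upwards [h₁.ae_posSemidef_kronecker h₂] with z hz
  rw [← mul_kronecker_mul, trace_kronecker,
    ENNReal.ofReal_re_mul_of_nonneg (hρ₁_pos.trace_mul_nonneg hz.1)]

/-- the assignment `B₁ × B₂ ↦ M₁(B₁) ⊗ M₂(B₂)` extends to a POM on
`Ω₁ × Ω₂` acting on `H₁ ⊗ H₂`, and for density operators `ρ₁, ρ₂` the induced
probability measure `tr((ρ₁ ⊗ ρ₂)(M₁ ⊗ M₂)(·))` is the product of the measures
`tr(ρ₁ M₁(·))` and `tr(ρ₂ M₂(·))`. -/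
theorem pom_tensor_product
    {Ω₁ Ω₂ : Type*} [MeasurableSpace Ω₁] [MeasurableSpace Ω₂] {d₁ d₂ : ℕ}
    (M₁ : POM Ω₁ (Fin d₁)) (M₂ : POM Ω₂ (Fin d₂))
    (ρ₁ : Matrix (Fin d₁) (Fin d₁) ℂ) (ρ₂ : Matrix (Fin d₂) (Fin d₂) ℂ)
    (hρ₁_pos : ρ₁.PosSemidef) (hρ₁_tr : ρ₁.trace = 1)
    (hρ₂_pos : ρ₂.PosSemidef) (hρ₂_tr : ρ₂.trace = 1)
    (μ₁ : Measure Ω₁) (μ₂ : Measure Ω₂)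
    [IsProbabilityMeasure μ₁] [IsProbabilityMeasure μ₂]
    (hμ₁ : ∀ B : Set Ω₁, MeasurableSet B →
      μ₁ B = ENNReal.ofReal ((ρ₁ * M₁.val B).trace.re))
    (hμ₂ : ∀ B : Set Ω₂, MeasurableSet B →
      μ₂ B = ENNReal.ofReal ((ρ₂ * M₂.val B).trace.re)) :
    ∃ M : POM (Ω₁ × Ω₂) (Fin d₁ × Fin d₂),
      (∀ (B₁ : Set Ω₁) (B₂ : Set Ω₂), MeasurableSet B₁ → MeasurableSet B₂ →
        M.val (B₁ ×ˢ B₂) = M₁.val B₁ ⊗ₖ M₂.val B₂) ∧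
      (∀ B : Set (Ω₁ × Ω₂), MeasurableSet B →
        ENNReal.ofReal (((ρ₁ ⊗ₖ ρ₂) * M.val B).trace.re) = (μ₁.prod μ₂) B) :=
  pom_tensor_product_general M₁ M₂ ρ₁ ρ₂ hρ₁_pos hρ₂_pos μ₁ μ₂ hμ₁ hμ₂
end

section
/- (Asymptotic lower bound, Theorem 1) Let (θ̂_n, M_n) be a sequence of adaptive estimators on n copies of ρ_θ that is asymptotically unbiased at θ (bias B_n → 0 and derivative of expectation A_n → I), with invertible Fisher information matrices. If the limit inferior of n·V_θ[θ̂_n, M_n] exists, then liminf_{n→∞} n Tr(G V_θ[θ̂_n, M_n]) ≥ C_θ(G), where C_θ(G) is the single-copy quasi-quantum Cramér-Rao bound and G ⪰ 0. -/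
/-!
For every `n ≥ 1` the Cramér–Rao inequality and the averaging identity `Jₙ = n • J` (with `J`
the Fisher information of a single-copy measurement) give
`n Tr(G Vₙ) ≥ n Tr(G Aₙ Jₙ⁻¹ Aₙᵀ) = Tr(Aₙᵀ G Aₙ J⁻¹) ≥ C(Aₙᵀ G Aₙ)`.
Taking the liminf, continuity of `C` along `Aₙᵀ G Aₙ → G` turns the right-hand side into `C(G)`.
-/

open Filter Matrix
open scoped MatrixOrder ComplexOrder

namespace Matrix.PosSemidef

variable {𝕜 n : Type*} [RCLike 𝕜] [Fintype n] {P Q : Matrix n n 𝕜}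

lemma trace_mul_nonneg_s9 (hP : P.PosSemidef) (hQ : Q.PosSemidef) : 0 ≤ (P * Q).trace := by
  classical
  obtain ⟨B, rfl⟩ := CStarAlgebra.nonneg_iff_eq_star_mul_self.mp hP.nonneg
  rw [star_eq_conjTranspose, Matrix.mul_assoc, trace_mul_comm]
  exact (hQ.mul_mul_conjTranspose_same B).trace_nonneg

lemma trace_mul_le_trace_mul {G V W : Matrix n n 𝕜} (hG : G.PosSemidef)
    (hVW : (V - W).PosSemidef) : (G * W).trace ≤ (G * V).trace := by
  have := hG.trace_mul_nonneg_s9 hVW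
  rwa [Matrix.mul_sub, trace_sub, sub_nonneg] at this

end Matrix.PosSemidef

section FisherInformation

variable {n ι : Type*} [Fintype n] [DecidableEq n] {Js : ι → Matrix n n ℝ}

lemma iInf_trace_mul_inv_le (hJs : ∀ i, (Js i).PosDef) {H : Matrix n n ℝ} (hH : H.PosSemidef)
    (i : ι) : ⨅ j, (H * (Js j)⁻¹).trace ≤ (H * (Js i)⁻¹).trace :=
  ciInf_le ⟨0, by
    rintro _ ⟨j, rfl⟩
    exact hH.trace_mul_nonneg_s9 (hJs j).inv.posSemidef⟩ i

lemma trace_mul_inv_smul {G A J : Matrix n n ℝ} (hJ : J.PosDef) {c : ℝ} (hc : c ≠ 0) :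
    (Aᵀ * G * A * J⁻¹).trace = c * (G * (A * (c • J)⁻¹ * Aᵀ)).trace := by
  have : Invertible c := invertibleOfNonzero hc
  rw [Matrix.inv_smul (A := J) c hJ.det_pos.ne'.isUnit, invOf_eq_inv, Matrix.mul_smul,
    Matrix.smul_mul, Matrix.mul_smul, trace_smul, smul_eq_mul, mul_inv_cancel_left₀ hc,
    trace_mul_comm G, Matrix.mul_assoc (Aᵀ * G), trace_mul_comm (Aᵀ * G)]
  simp only [Matrix.mul_assoc]

lemma iInf_trace_transpose_mul_mul_le (hJs : ∀ i, (Js i).PosDef) {G V A : Matrix n n ℝ}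
    (hG : G.PosSemidef) {c : ℝ} (hc : 0 < c) (i : ι)
    (hCR : (V - A * (c • Js i)⁻¹ * Aᵀ).PosSemidef) :
    ⨅ j, (Aᵀ * G * A * (Js j)⁻¹).trace ≤ c * (G * V).trace := by
  have hAGA : (Aᵀ * G * A).PosSemidef := by
    simpa only [conjTranspose_eq_transpose_of_trivial] using hG.conjTranspose_mul_mul_same A
  calc ⨅ j, (Aᵀ * G * A * (Js j)⁻¹).trace ≤ (Aᵀ * G * A * (Js i)⁻¹).trace :=
        iInf_trace_mul_inv_le hJs hAGA i
    _ = c * (G * (A * (c • Js i)⁻¹ * Aᵀ)).trace := trace_mul_inv_smul (hJs i) hc.ne'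
    _ ≤ c * (G * V).trace := by gcongr; exact hG.trace_mul_le_trace_mul hCR

end FisherInformation

theorem asymptotic_lower_bound_adaptive_general {m : ℕ} {ι : Type*}
    (Js : ι → Matrix (Fin m) (Fin m) ℝ) (hJs : ∀ i, (Js i).PosDef)
    (C : Matrix (Fin m) (Fin m) ℝ → ℝ)
    (hC : ∀ G, C G = ⨅ i, (G * (Js i)⁻¹).trace)
    (G : Matrix (Fin m) (Fin m) ℝ) (hG : G.PosSemidef)
    (V A Jn : ℕ → Matrix (Fin m) (Fin m) ℝ)
    -- generalized Cramér-Rao inequality for asymptotically unbiased estimators: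
    (hCR : ∀ n, 1 ≤ n → (V n - A n * (Jn n)⁻¹ * (A n)ᵀ).PosSemidef)
    -- averaging: (1/n) Jn n is the Fisher information of a single-copy POM:
    (hAvg : ∀ n, 1 ≤ n → ∃ i : ι, Jn n = (n : ℝ) • Js i)
    -- continuity of C along the sequence (A n)ᵀ G (A n) → G:
    (hCont : Tendsto (fun n => C ((A n)ᵀ * G * A n)) atTop (nhds (C G)))
    -- the liminf of n Tr(G V n) exists:
    (hBdd : IsBoundedUnder (· ≤ ·) atTop (fun n : ℕ => (n : ℝ) * (G * V n).trace)) :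
    C G ≤ liminf (fun n : ℕ => (n : ℝ) * (G * V n).trace) atTop := by
  have hbound : ∀ᶠ n in atTop, C ((A n)ᵀ * G * A n) ≤ (n : ℝ) * (G * V n).trace := by
    filter_upwards [eventually_ge_atTop 1] with n hn
    obtain ⟨i, hi⟩ := hAvg n hn
    rw [hC]
    exact iInf_trace_transpose_mul_mul_le hJs hG (by exact_mod_cast hn) i (hi ▸ hCR n hn)
  calc C G = liminf (fun n => C ((A n)ᵀ * G * A n)) atTop := hCont.liminf_eq.symm
    _ ≤ liminf (fun n : ℕ => (n : ℝ) * (G * V n).trace) atTop :=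
        liminf_le_liminf hbound hCont.isBoundedUnder_ge hBdd.isCoboundedUnder_ge

/-- Theorem 1: asymptotic lower bound for adaptive estimators.
Single-copy POMs with invertible Fisher information at `θ` are indexed by `ι`,
`Js i` being their Fisher information matrices, and `C G = inf_i Tr(G (Js i)⁻¹)`
is the single-copy quasi-quantum Cramér–Rao bound.  For a sequence of adaptive
estimators `(θ̂_n, M_n)` on `n` copies of `ρ_θ`: `V n` is the mean square error
matrix, `A n` the derivative of the expectation, `Jn n` the (invertible) Fisher
information of `M_n`; asymptotic unbiasedness gives `A n → 1`, the generalized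
Cramér–Rao inequality `V n ⪰ A n (Jn n)⁻¹ (A n)ᵀ` holds, and by the averaging
identity `(1/n) Jn n` is the Fisher information of a single-copy POM.  Assuming
continuity of `C` along `(A n)ᵀ G (A n) → G` and that `liminf n Tr(G V n)`
exists (boundedness), one has `liminf n Tr(G V n) ≥ C(G)`. -/
theorem asymptotic_lower_bound_adaptive {m : ℕ} {ι : Type*} [Nonempty ι]
    (Js : ι → Matrix (Fin m) (Fin m) ℝ) (hJs : ∀ i, (Js i).PosDef)
    (C : Matrix (Fin m) (Fin m) ℝ → ℝ)
    (hC : ∀ G, C G = ⨅ i, (G * (Js i)⁻¹).trace)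
    (G : Matrix (Fin m) (Fin m) ℝ) (hG : G.PosSemidef)
    (V A Jn : ℕ → Matrix (Fin m) (Fin m) ℝ)
    (hJn : ∀ n, 1 ≤ n → (Jn n).PosDef)
    -- generalized Cramér-Rao inequality for asymptotically unbiased estimators:
    (hCR : ∀ n, 1 ≤ n → (V n - A n * (Jn n)⁻¹ * (A n)ᵀ).PosSemidef)
    -- averaging: (1/n) Jn n is the Fisher information of a single-copy POM:
    (hAvg : ∀ n, 1 ≤ n → ∃ i : ι, Jn n = (n : ℝ) • Js i)
    -- asymptotic unbiasedness:
    (hA : Tendsto A atTop (nhds 1))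
    -- continuity of C along the sequence (A n)ᵀ G (A n) → G:
    (hCont : Tendsto (fun n => C ((A n)ᵀ * G * A n)) atTop (nhds (C G)))
    -- the liminf of n Tr(G V n) exists:
    (hBdd : IsBoundedUnder (· ≤ ·) atTop (fun n : ℕ => (n : ℝ) * (G * V n).trace)) :
    C G ≤ liminf (fun n : ℕ => (n : ℝ) * (G * V n).trace) atTop :=
  asymptotic_lower_bound_adaptive_general Js hJs C hC G hG V A Jn hCR hAvg hCont hBdd
end

section
/- The generalized Cramér-Rao inequality with bias correction: if an estimator T for the family {P_θ} satisfies ∫ T^j ∂_k dP_θ = A^j_k with A an invertible m × m matrix, and J_θ is the invertible Fisher information, then the mean square error matrix about the mean satisfies Cov_θ[T] ⪰ A J_θ^{-1} Aᵀ in the Loewner order. -/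
/-!
The matrix of second moments of `(T - μT, s)` in `L²(P)` is a Gram matrix, hence positive
semidefinite; its score block is `J`, positive definite once invertible, and its off-diagonal
block is `A`, because the scores have mean zero and `E[T_j s_k] = ∫ T_j ∂_k p dν`. The claim is
the positivity of the Schur complement of `J` in this block matrix.
-/

open MeasureTheory Matrix

namespace MeasureTheory

section MomentMatrix

variable {Ω ι κ : Type*} [MeasurableSpace Ω] (P : Measure Ω)

noncomputable def momentMatrix (X : ι → Ω → ℝ) (Y : κ → Ω → ℝ) : Matrix ι κ ℝ :=
  Matrix.of fun i j => ∫ ω, X i ω * Y j ω ∂P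

variable {P}

theorem momentMatrix_transpose (X : ι → Ω → ℝ) (Y : κ → Ω → ℝ) :
    (momentMatrix P X Y)ᵀ = momentMatrix P Y X := by
  ext i j
  simp only [momentMatrix, transpose_apply, of_apply, mul_comm]

theorem momentMatrix_sumElim (X : ι → Ω → ℝ) (Y : κ → Ω → ℝ) :
    momentMatrix P (Sum.elim X Y) (Sum.elim X Y) =
      fromBlocks (momentMatrix P X X) (momentMatrix P X Y)
        (momentMatrix P Y X) (momentMatrix P Y Y) := by
  ext (i | i) (j | j) <;> rfl

theorem posSemidef_momentMatrix [Finite ι] {X : ι → Ω → ℝ} (hX : ∀ i, MemLp (X i) 2 P) :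
    (momentMatrix P X X).PosSemidef := by
  have hgram : momentMatrix P X X = gram ℝ fun i => MemLp.toLp (X i) (hX i) := by
    ext i j
    rw [gram_apply, L2.inner_def]
    refine integral_congr_ae ?_
    filter_upwards [(hX i).coeFn_toLp, (hX j).coeFn_toLp] with ω hi hj
    simp [hi, hj, mul_comm]
  rw [hgram]
  exact posSemidef_gram ℝ _

theorem posSemidef_momentMatrix_sub_mul_inv_mul_transpose [Finite ι] [Fintype κ]
    [DecidableEq κ] {X : ι → Ω → ℝ} {Y : κ → Ω → ℝ}
    (hX : ∀ i, MemLp (X i) 2 P) (hY : ∀ j, MemLp (Y j) 2 P)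
    (hYY : IsUnit (momentMatrix P Y Y).det) :
    (momentMatrix P X X - momentMatrix P X Y * (momentMatrix P Y Y)⁻¹ *
      (momentMatrix P X Y)ᵀ).PosSemidef := by
  have hXY : ∀ i, MemLp (Sum.elim X Y i) 2 P := by rintro (i | j) <;> simp [hX, hY]
  have hPD : (momentMatrix P Y Y).PosDef :=
    (posSemidef_momentMatrix hY).posDef_iff_isUnit.mpr ((isUnit_iff_isUnit_det _).mpr hYY)
  have := hPD.isUnit.invertible
  have h := (PosDef.fromBlocks₂₂ (momentMatrix P X X) (momentMatrix P X Y) hPD).mp ?_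
  · rwa [conjTranspose_eq_transpose_of_trivial] at h
  · rw [conjTranspose_eq_transpose_of_trivial, momentMatrix_transpose, ← momentMatrix_sumElim]
    exact posSemidef_momentMatrix hXY

theorem momentMatrix_sub_const_left [IsFiniteMeasure P] {X : ι → Ω → ℝ} {Y : κ → Ω → ℝ}
    (hX : ∀ i, MemLp (X i) 2 P) (hY : ∀ j, MemLp (Y j) 2 P) (hY0 : ∀ j, ∫ ω, Y j ω ∂P = 0)
    (c : ι → ℝ) :
    momentMatrix P (fun i ω => X i ω - c i) Y = momentMatrix P X Y := by
  ext i j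
  have hXY : Integrable (fun ω => X i ω * Y j ω) P := (hX i).integrable_mul (hY j)
  simp only [momentMatrix, of_apply, sub_mul]
  rw [integral_sub hXY (((hY j).integrable one_le_two).const_mul _),
    integral_const_mul, hY0, mul_zero, sub_zero]

end MomentMatrix

theorem integral_withDensity_ofReal {Ω : Type*} [MeasurableSpace Ω] {ν : Measure Ω} {q : Ω → ℝ}
    (hq : AEMeasurable q ν) (hq0 : 0 ≤ᵐ[ν] q) (f : Ω → ℝ) :
    ∫ ω, f ω ∂ν.withDensity (fun ω => ENNReal.ofReal (q ω)) = ∫ ω, q ω * f ω ∂ν := by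
  rw [integral_withDensity_eq_integral_toReal_smul₀ hq.ennreal_ofReal
    (.of_forall fun _ => ENNReal.ofReal_lt_top)]
  refine integral_congr_ae ?_
  filter_upwards [hq0] with ω hω
  rw [ENNReal.toReal_ofReal hω, smul_eq_mul]

end MeasureTheory

theorem generalized_cramer_rao_bias_general
    {Ω : Type*} [MeasurableSpace Ω] (ν : Measure Ω) {m : ℕ}
    (p : (Fin m → ℝ) → Ω → ℝ) (dp : Fin m → Ω → ℝ) (θ₀ : Fin m → ℝ)
    (T : Fin m → Ω → ℝ)
    -- the family of densities:
    (hp_meas : ∀ θ, Measurable (p θ))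
    (hp_pos : ∀ ω, 0 < p θ₀ ω)
    (hp_prob : ∀ θ, ∫ ω, p θ ω ∂ν = 1)
    -- the distribution at θ₀:
    (P : Measure Ω)
    (hP : P = ν.withDensity (fun ω => ENNReal.ofReal (p θ₀ ω)))
    -- the score functions:
    (s : Fin m → Ω → ℝ)
    (hs : ∀ i ω, s i ω = dp i ω / p θ₀ ω)
    (hs2 : ∀ i, MemLp (s i) 2 P)
    -- differentiation under the integral applied to the normalization:
    (h_dui0 : ∀ i, ∫ ω, dp i ω ∂ν = 0)
    (hT2 : ∀ j, MemLp (T j) 2 P)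
    -- the bias-correction matrix `A` (derivative of the expectation of `T`):
    (A : Matrix (Fin m) (Fin m) ℝ)
    (h_local : ∀ j k, ∫ ω, T j ω * dp k ω ∂ν = A j k)
    -- the mean of T:
    (μT : Fin m → ℝ)
    -- Fisher information matrix and covariance matrix about the mean:
    (J Cov : Matrix (Fin m) (Fin m) ℝ)
    (hJ : ∀ i j, J i j = ∫ ω, s i ω * s j ω ∂P)
    (hJinv : IsUnit J.det)
    (hCov : ∀ i j, Cov i j = ∫ ω, (T i ω - μT i) * (T j ω - μT j) ∂P) :
    (Cov - A * J⁻¹ * A.transpose).PosSemidef := by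
  have hPν : ∀ f : Ω → ℝ, ∫ ω, f ω ∂P = ∫ ω, p θ₀ ω * f ω ∂ν := hP ▸
    integral_withDensity_ofReal (hp_meas θ₀).aemeasurable (.of_forall fun ω => (hp_pos ω).le)
  have : IsFiniteMeasure P := hP ▸ isFiniteMeasure_withDensity_ofReal
    (Integrable.of_integral_ne_zero (by simp [hp_prob])).hasFiniteIntegral
  have hdp : ∀ k ω, p θ₀ ω * s k ω = dp k ω := fun k ω => by
    rw [hs, mul_div_cancel₀ _ (hp_pos ω).ne']
  have hs0 : ∀ k, ∫ ω, s k ω ∂P = 0 := fun k => by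
    simp only [hPν, hdp, h_dui0]
  have hTs : momentMatrix P T s = A := by
    ext j k
    simp only [momentMatrix, of_apply, hPν, mul_left_comm (p θ₀ _), hdp, h_local]
  have hTc : momentMatrix P (fun j ω => T j ω - μT j) s = A :=
    (momentMatrix_sub_const_left hT2 hs2 hs0 μT).trans hTs
  obtain rfl : J = momentMatrix P s s := Matrix.ext hJ
  obtain rfl : Cov = momentMatrix P (fun j ω => T j ω - μT j) (fun j ω => T j ω - μT j) :=
    Matrix.ext hCov
  rw [← hTc]
  exact posSemidef_momentMatrix_sub_mul_inv_mul_transpose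
    (fun j => (hT2 j).sub (memLp_const _)) hs2 hJinv

/-- generalized Cramér–Rao inequality with bias correction.
If the estimator `T` satisfies `∫ T^j ∂_k dP_θ = A^j_k` with `A` invertible, and the
Fisher information `J` is invertible, then the covariance matrix about the mean
satisfies `Cov ⪰ A J⁻¹ Aᵀ` in the Loewner order. -/
theorem generalized_cramer_rao_bias
    {Ω : Type*} [MeasurableSpace Ω] (ν : Measure Ω) {m : ℕ}
    (p : (Fin m → ℝ) → Ω → ℝ) (dp : Fin m → Ω → ℝ) (θ₀ : Fin m → ℝ)
    (T : Fin m → Ω → ℝ)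
    -- the family of densities:
    (hp_meas : ∀ θ, Measurable (p θ))
    (hp_pos : ∀ ω, 0 < p θ₀ ω)
    (hp_prob : ∀ θ, ∫ ω, p θ ω ∂ν = 1)
    -- differentiability in θ at θ₀ (coordinatewise partial derivatives):
    (hderiv : ∀ i ω, HasDerivAt (fun t => p (Function.update θ₀ i t) ω) (dp i ω) (θ₀ i))
    -- the distribution at θ₀:
    (P : Measure Ω)
    (hP : P = ν.withDensity (fun ω => ENNReal.ofReal (p θ₀ ω)))
    -- the score functions:
    (s : Fin m → Ω → ℝ)
    (hs : ∀ i ω, s i ω = dp i ω / p θ₀ ω)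
    (hs2 : ∀ i, MemLp (s i) 2 P)
    -- differentiation under the integral applied to the normalization:
    (h_dui0 : ∀ i, ∫ ω, dp i ω ∂ν = 0)
    (hT2 : ∀ j, MemLp (T j) 2 P)
    -- the bias-correction matrix `A` (derivative of the expectation of `T`):
    (A : Matrix (Fin m) (Fin m) ℝ) (hAinv : IsUnit A.det)
    (h_local : ∀ j k, ∫ ω, T j ω * dp k ω ∂ν = A j k)
    -- the mean of T:
    (μT : Fin m → ℝ) (hμT : ∀ j, μT j = ∫ ω, T j ω ∂P)
    -- Fisher information matrix and covariance matrix about the mean: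
    (J Cov : Matrix (Fin m) (Fin m) ℝ)
    (hJ : ∀ i j, J i j = ∫ ω, s i ω * s j ω ∂P)
    (hJinv : IsUnit J.det)
    (hCov : ∀ i j, Cov i j = ∫ ω, (T i ω - μT i) * (T j ω - μT j) ∂P) :
    (Cov - A * J⁻¹ * A.transpose).PosSemidef :=
  generalized_cramer_rao_bias_general ν p dp θ₀ T hp_meas hp_pos hp_prob P hP s hs hs2 h_dui0 hT2 A
    h_local μT J Cov hJ hJinv hCov
end
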